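/- arXiv:2105.05883 — 4 statements merged into one kernel-verified Lean document; each statement's English description precedes it below -/
import Mathlib

section
/- Let p_1,...,p_n ≥ 0 with ∑ p_i = 1, and for k = 1,...,m let (r_{k,1},...,r_{k,n}) be probability distributions on {1,...,n} satisfying ∑_{k=1}^m r_{k,i} = m p_i for all i. For gradients g_1,...,g_n ∈ ℝ^d with g = ∑_i p_i g_i and g_{W_k} = ∑_i r_{k,i} g_i, one has (1/m²)∑_{k=1}^m ∑_{i=1}^n r_{k,i} ‖g_i − g_{W_k}‖² = (1/m²)( m ∑_i p_i ‖g_i‖² − ∑_{k=1}^m ‖g_{W_k}‖² ) ≤ (1/m)( ∑_i p_i ‖g_i‖² − ‖g‖² ). -/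
/-!
Both sides come from the parallel-axis identity `∑ wᵢ ‖zᵢ - c‖² = ∑ wᵢ ‖zᵢ‖² - (∑ wᵢ) ‖c‖²`,
`c` the centre of mass. Applied inside each cluster, with unbiasedness turning the total cluster
weight of client `i` into `m pᵢ`, it gives the identity. Unbiasedness also makes `g` the plain
average of the cluster means `g_{W_k}`, so the identity applied across clusters shows that the
multinomial term exceeds the clustered one by `(1/m²) ∑ₖ ‖g_{W_k} - g‖² ≥ 0`.
-/

open Finset

theorem Finset.inner_sum_smul_centerMass {ι E : Type*} [NormedAddCommGroup E]
    [InnerProductSpace ℝ E] (s : Finset ι) (w : ι → ℝ) (z : ι → E) :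
    inner ℝ (∑ i ∈ s, w i • z i) (s.centerMass w z) = (∑ i ∈ s, w i) * ‖s.centerMass w z‖ ^ 2 := by
  by_cases hW : ∑ i ∈ s, w i = 0
  · simp [centerMass, hW]
  · have : ∑ i ∈ s, w i • z i = (∑ i ∈ s, w i) • s.centerMass w z :=
      (smul_inv_smul₀ hW _).symm
    rw [this, real_inner_smul_left, real_inner_self_eq_norm_sq]

theorem Finset.sum_mul_norm_sub_centerMass_sq {ι E : Type*} [NormedAddCommGroup E]
    [InnerProductSpace ℝ E] (s : Finset ι) (w : ι → ℝ) (z : ι → E) :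
    ∑ i ∈ s, w i * ‖z i - s.centerMass w z‖ ^ 2 =
      ∑ i ∈ s, w i * ‖z i‖ ^ 2 - (∑ i ∈ s, w i) * ‖s.centerMass w z‖ ^ 2 := by
  set c := s.centerMass w z
  have hcross : ∑ i ∈ s, w i * inner ℝ (z i) c = (∑ i ∈ s, w i) * ‖c‖ ^ 2 := by
    simp_rw [← real_inner_smul_left, ← sum_inner]
    exact s.inner_sum_smul_centerMass w z
  calc ∑ i ∈ s, w i * ‖z i - c‖ ^ 2
      = ∑ i ∈ s, w i * ‖z i‖ ^ 2 - 2 * ∑ i ∈ s, w i * inner ℝ (z i) c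
          + (∑ i ∈ s, w i) * ‖c‖ ^ 2 := by
        simp_rw [norm_sub_sq_real, mul_add, mul_sub, sum_add_distrib, sum_sub_distrib, mul_sum,
          sum_mul]
        congr 2; exact sum_congr rfl fun i _ => by ring
    _ = _ := by rw [hcross]; ring

theorem Finset.sum_sum_smul_eq_smul_of_sum_eq_mul {κ ι R M : Type*} [CommSemiring R]
    [AddCommMonoid M] [Module R M] (s : Finset κ) (t : Finset ι)
    {r : κ → ι → R} {p : ι → R} {c : R}
    (h : ∀ i ∈ t, ∑ k ∈ s, r k i = c * p i) (v : ι → M) :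
    ∑ k ∈ s, ∑ i ∈ t, r k i • v i = c • ∑ i ∈ t, p i • v i := by
  rw [sum_comm, smul_sum]
  refine sum_congr rfl fun i hi => ?_
  rw [← sum_smul, h i hi, mul_smul]

theorem clustered_var_le_md_general (n m d : ℕ) (hm : 0 < m)
    (p : Fin n → ℝ)
    (r : Fin m → Fin n → ℝ)
    (hr1 : ∀ k, ∑ i, r k i = 1)
    (hunb : ∀ i, ∑ k, r k i = m * p i)
    (g : Fin n → EuclideanSpace ℝ (Fin d))
    (gbar : EuclideanSpace ℝ (Fin d)) (hgbar : gbar = ∑ i, p i • g i)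
    (gW : Fin m → EuclideanSpace ℝ (Fin d)) (hgW : ∀ k, gW k = ∑ i, r k i • g i) :
    ((1 / (m : ℝ) ^ 2) * ∑ k, ∑ i, r k i * ‖g i - gW k‖ ^ 2 =
        (1 / (m : ℝ) ^ 2) * ((m : ℝ) * (∑ i, p i * ‖g i‖ ^ 2) - ∑ k, ‖gW k‖ ^ 2)) ∧
      (1 / (m : ℝ) ^ 2) * ∑ k, ∑ i, r k i * ‖g i - gW k‖ ^ 2 ≤
        (1 / (m : ℝ)) * ((∑ i, p i * ‖g i‖ ^ 2) - ‖gbar‖ ^ 2) := by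
  have hunb' : ∀ i ∈ univ, ∑ k, r k i = m * p i := fun i _ => hunb i
  have hmean : ∑ k, gW k = (m : ℝ) • gbar := by
    simp_rw [hgW, hgbar]
    exact sum_sum_smul_eq_smul_of_sum_eq_mul _ _ hunb' g
  have hwithin_cluster :
      ∀ k, ∑ i, r k i * ‖g i - gW k‖ ^ 2 = ∑ i, r k i * ‖g i‖ ^ 2 - ‖gW k‖ ^ 2 := by
    intro k
    have := univ.sum_mul_norm_sub_centerMass_sq (r k) g
    rwa [centerMass_eq_of_sum_1 _ _ (hr1 k), ← hgW, hr1 k, one_mul] at this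
  have hacross_clusters : ∑ k, ‖gW k - gbar‖ ^ 2 = ∑ k, ‖gW k‖ ^ 2 - m * ‖gbar‖ ^ 2 := by
    have hc : univ.centerMass (fun _ => (1 : ℝ)) gW = gbar := by
      simp [centerMass, hmean, hm.ne']
    simpa [hc] using univ.sum_mul_norm_sub_centerMass_sq (fun _ => (1 : ℝ)) gW
  have htotal : ∑ k, ∑ i, r k i * ‖g i - gW k‖ ^ 2 =
      m * ∑ i, p i * ‖g i‖ ^ 2 - ∑ k, ‖gW k‖ ^ 2 := by
    have hmoment : ∑ k, ∑ i, r k i * ‖g i‖ ^ 2 = m * ∑ i, p i * ‖g i‖ ^ 2 :=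
      sum_sum_smul_eq_smul_of_sum_eq_mul _ _ hunb' _
    rw [sum_congr rfl fun k _ => hwithin_cluster k, sum_sub_distrib, hmoment]
  refine ⟨by rw [htotal], ?_⟩
  calc (1 / (m : ℝ) ^ 2) * ∑ k, ∑ i, r k i * ‖g i - gW k‖ ^ 2
      = 1 / m * (∑ i, p i * ‖g i‖ ^ 2 - ‖gbar‖ ^ 2) - 1 / m ^ 2 * ∑ k, ‖gW k - gbar‖ ^ 2 := by
        rw [htotal, hacross_clusters]
        field_simp
        ring
    _ ≤ _ := sub_le_self _ (by positivity)

/-- Key identity and comparison: the clustered-sampling variance term equals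
`(1/m²)(m ∑ p_i‖g_i‖² − ∑_k ‖g_{W_k}‖²)` and is at most the MD term
`(1/m)(∑ p_i‖g_i‖² − ‖g‖²)`. -/
theorem clustered_var_le_md (n m d : ℕ) (hm : 0 < m)
    (p : Fin n → ℝ) (hp0 : ∀ i, 0 ≤ p i) (hp1 : ∑ i, p i = 1)
    (r : Fin m → Fin n → ℝ)
    (hr0 : ∀ k i, 0 ≤ r k i) (hr1 : ∀ k, ∑ i, r k i = 1)
    (hunb : ∀ i, ∑ k, r k i = m * p i)
    (g : Fin n → EuclideanSpace ℝ (Fin d))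
    (gbar : EuclideanSpace ℝ (Fin d)) (hgbar : gbar = ∑ i, p i • g i)
    (gW : Fin m → EuclideanSpace ℝ (Fin d)) (hgW : ∀ k, gW k = ∑ i, r k i • g i) :
    ((1 / (m : ℝ) ^ 2) * ∑ k, ∑ i, r k i * ‖g i - gW k‖ ^ 2 =
        (1 / (m : ℝ) ^ 2) * ((m : ℝ) * (∑ i, p i * ‖g i‖ ^ 2) - ∑ k, ‖gW k‖ ^ 2)) ∧
      (1 / (m : ℝ) ^ 2) * ∑ k, ∑ i, r k i * ‖g i - gW k‖ ^ 2 ≤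
        (1 / (m : ℝ)) * ((∑ i, p i * ‖g i‖ ^ 2) - ‖gbar‖ ^ 2) :=
  clustered_var_le_md_general n m d hm p r hr1 hunb g gbar hgbar gW hgW
end

section
/- Let l_1,...,l_m be i.i.d. indices with P(l = i) = p_i. For any z_1,...,z_n, x-dependent gradients g_1,...,g_n ∈ ℝ^d with g = ∑_i p_i g_i satisfying the dissimilarity bound ∑_i p_i ‖g_i‖² ≤ β²‖g‖² + κ², one has E[‖(1/m)∑_{j=1}^m z_{l_j}‖²] ≤ 3∑_{i=1}^n p_i ‖z_i − g_i‖² + 3‖g‖² + (3/m)(β²‖g‖² + κ²). -/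
/-! For i.i.d. indices the sample sum `S = ∑ⱼ v (l j)` has the exact second moment
`E‖S‖² = m E‖v‖² + m (m - 1) ‖E v‖²`: peeling off the first index, the cross term
`E ⟪v (l 0), S'⟫` factors as `⟪E v, E S'⟫` by independence. So the sample mean of the `z`'s has
second moment `(1/m) E‖z‖² + (1 - 1/m) ‖E z‖²`. Splitting `z = (z - g) + g`, the inequality
`‖a + b‖² ≤ 2‖a‖² + 2‖b‖²` and Jensen bound `E‖z‖²` by `2 E‖z - g‖² + 2 (β²‖ḡ‖² + κ²)` and
`‖E z‖²` by `2 E‖z - g‖² + 2 ‖ḡ‖²`; the claim follows, even with 2 in place of 3. -/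

open Finset

section

theorem norm_add_sq_le_two_mul {E : Type*} [SeminormedAddCommGroup E] (a b : E) :
    ‖a + b‖ ^ 2 ≤ 2 * (‖a‖ ^ 2 + ‖b‖ ^ 2) :=
  (pow_le_pow_left₀ (norm_nonneg _) (norm_add_le a b) 2).trans add_sq_le

variable {ι E : Type*} [Fintype ι] [NormedAddCommGroup E] [InnerProductSpace ℝ E] {p : ι → ℝ}

theorem sum_prod_smul_fin_succ {M : Type*} [AddCommMonoid M] [Module ℝ M] {m : ℕ}
    (F : (Fin (m + 1) → ι) → M) :
    ∑ l, (∏ j, p (l j)) • F l =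
      ∑ i, p i • ∑ l : Fin m → ι, (∏ j, p (l j)) • F (Fin.cons i l) := by
  rw [← (Fin.consEquiv fun _ => ι).sum_comp, Fintype.sum_prod_type]
  simp [Fin.consEquiv, Fin.prod_univ_succ, smul_sum, mul_smul]

variable (hp1 : ∑ i, p i = 1)
include hp1

theorem sum_prod_eq_one_of_sum_eq_one (m : ℕ) : ∑ l : Fin m → ι, ∏ j, p (l j) = 1 := by
  rw [← Fintype.prod_sum fun (_ : Fin m) i => p i, hp1, prod_const_one]

theorem sum_prod_smul_sum (v : ι → E) (m : ℕ) :
    ∑ l : Fin m → ι, (∏ j, p (l j)) • ∑ j, v (l j) = (m : ℝ) • ∑ i, p i • v i := by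
  induction m with
  | zero => simp
  | succ m ih =>
    simp only [sum_prod_smul_fin_succ, Fin.sum_univ_succ, Fin.cons_zero, Fin.cons_succ, smul_add,
      sum_add_distrib, ← sum_smul, sum_prod_eq_one_of_sum_eq_one hp1, one_smul, ih]
    rw [hp1, one_smul, add_comm, Nat.cast_succ, add_smul, one_smul]

theorem sum_prod_mul_norm_sum_sq (v : ι → E) (m : ℕ) :
    ∑ l : Fin m → ι, (∏ j, p (l j)) * ‖∑ j, v (l j)‖ ^ 2 =
      m * ∑ i, p i * ‖v i‖ ^ 2 + m * (m - 1) * ‖∑ i, p i • v i‖ ^ 2 := by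
  induction m with
  | zero => simp
  | succ m ih =>
    set μ := ∑ i, p i • v i with hμ
    have hcross (i : ι) :
        ∑ l : Fin m → ι, (∏ j, p (l j)) * inner ℝ (v i) (∑ j, v (l j)) = m * inner ℝ (v i) μ := by
      rw [← real_inner_smul_right, ← sum_prod_smul_sum hp1, inner_sum]
      simp_rw [real_inner_smul_right]
    have hmean : ∑ i, p i * inner ℝ (v i) μ = ‖μ‖ ^ 2 := by
      rw [← real_inner_self_eq_norm_sq, hμ, sum_inner]
      simp_rw [real_inner_smul_left]
    calc ∑ l : Fin (m + 1) → ι, (∏ j, p (l j)) * ‖∑ j, v (l j)‖ ^ 2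
        = ∑ i, p i * ∑ l : Fin m → ι, (∏ j, p (l j)) * ‖v i + ∑ j, v (l j)‖ ^ 2 := by
          simpa only [smul_eq_mul, Fin.sum_univ_succ, Fin.cons_zero, Fin.cons_succ] using
            sum_prod_smul_fin_succ (p := p) fun l => ‖∑ j, v (l j)‖ ^ 2
      _ = ∑ i, p i * (‖v i‖ ^ 2 + 2 * (m * inner ℝ (v i) μ) +
            (m * ∑ i, p i * ‖v i‖ ^ 2 + m * (m - 1) * ‖μ‖ ^ 2)) := by
          have hexpand (w : ℝ) (a b : E) :
              w * ‖a + b‖ ^ 2 = w * ‖a‖ ^ 2 + 2 * (w * inner ℝ a b) + w * ‖b‖ ^ 2 := by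
            rw [norm_add_sq_real]; ring
          simp_rw [hexpand, sum_add_distrib, ← sum_mul, ← mul_sum,
            sum_prod_eq_one_of_sum_eq_one hp1, one_mul, hcross, ih]
      _ = (m + 1) * ∑ i, p i * ‖v i‖ ^ 2 + (m + 1) * m * ‖μ‖ ^ 2 := by
          have hexpand (i : ι) (c : ℝ) : p i * (‖v i‖ ^ 2 + 2 * (m * inner ℝ (v i) μ) + c) =
              p i * ‖v i‖ ^ 2 + 2 * m * (p i * inner ℝ (v i) μ) + p i * c := by ring
          simp_rw [hexpand, sum_add_distrib, ← sum_mul, ← mul_sum, hmean, hp1]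
          ring
      _ = _ := by push_cast; ring

theorem sum_prod_mul_norm_mean_sq (v : ι → E) {m : ℕ} (hm : m ≠ 0) :
    ∑ l : Fin m → ι, (∏ j, p (l j)) * ‖(1 / (m : ℝ)) • ∑ j, v (l j)‖ ^ 2 =
      1 / m * ∑ i, p i * ‖v i‖ ^ 2 + (1 - 1 / m) * ‖∑ i, p i • v i‖ ^ 2 := by
  have hm' : (m : ℝ) ≠ 0 := Nat.cast_ne_zero.mpr hm
  simp_rw [norm_smul, mul_pow, mul_left_comm _ (‖(1 / (m : ℝ))‖ ^ 2), ← mul_sum,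
    sum_prod_mul_norm_sum_sq hp1, Real.norm_eq_abs, sq_abs]
  field_simp

theorem norm_sum_smul_sq_le (hp0 : ∀ i, 0 ≤ p i) (v : ι → E) :
    ‖∑ i, p i • v i‖ ^ 2 ≤ ∑ i, p i * ‖v i‖ ^ 2 :=
  (convexOn_univ_norm.pow (fun _ _ => norm_nonneg _) 2).map_sum_le (fun i _ => hp0 i) hp1
    (fun i _ => Set.mem_univ (v i))

end

theorem md_sampling_second_moment_general (n m d : ℕ) (hm : 0 < m)
    (p : Fin n → ℝ) (hp0 : ∀ i, 0 ≤ p i) (hp1 : ∑ i, p i = 1)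
    (z g : Fin n → EuclideanSpace ℝ (Fin d))
    (gbar : EuclideanSpace ℝ (Fin d)) (hgbar : gbar = ∑ i, p i • g i)
    (β κ : ℝ)
    (hdiss : ∑ i, p i * ‖g i‖ ^ 2 ≤ β ^ 2 * ‖gbar‖ ^ 2 + κ ^ 2) :
    ∑ l : Fin m → Fin n, (∏ j, p (l j)) * ‖(1 / (m : ℝ)) • ∑ j, z (l j)‖ ^ 2 ≤
      3 * (∑ i, p i * ‖z i - g i‖ ^ 2) + 3 * ‖gbar‖ ^ 2 +
        (3 / (m : ℝ)) * (β ^ 2 * ‖gbar‖ ^ 2 + κ ^ 2) := by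
  set A := ∑ i, p i * ‖z i - g i‖ ^ 2
  set D := β ^ 2 * ‖gbar‖ ^ 2 + κ ^ 2
  have hA : 0 ≤ A := sum_nonneg fun i _ => mul_nonneg (hp0 i) (sq_nonneg _)
  have hD : 0 ≤ D := (sum_nonneg fun i _ => mul_nonneg (hp0 i) (sq_nonneg _)).trans hdiss
  have hz : ∑ i, p i * ‖z i‖ ^ 2 ≤ 2 * A + 2 * D := by
    calc ∑ i, p i * ‖z i‖ ^ 2 ≤ ∑ i, p i * (2 * (‖z i - g i‖ ^ 2 + ‖g i‖ ^ 2)) :=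
          sum_le_sum fun i _ => mul_le_mul_of_nonneg_left
            (by simpa using norm_add_sq_le_two_mul (z i - g i) (g i)) (hp0 i)
      _ = 2 * A + 2 * ∑ i, p i * ‖g i‖ ^ 2 := by
          simp_rw [A, mul_add, mul_left_comm (p _), sum_add_distrib, ← mul_sum]
      _ ≤ 2 * A + 2 * D := by gcongr
  have hmean : ‖∑ i, p i • z i‖ ^ 2 ≤ 2 * A + 2 * ‖gbar‖ ^ 2 := by
    have hdev : ∑ i, p i • z i = ∑ i, p i • (z i - g i) + gbar := by
      simp [hgbar, smul_sub]
    rw [hdev]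
    linarith [norm_add_sq_le_two_mul (∑ i, p i • (z i - g i)) gbar,
      norm_sum_smul_sq_le hp1 hp0 fun i => z i - g i]
  have ht : 1 / (m : ℝ) ≤ 1 := by
    rw [div_le_one (by positivity)]; exact_mod_cast hm
  rw [sum_prod_mul_norm_mean_sq hp1 z hm.ne']
  calc 1 / (m : ℝ) * ∑ i, p i * ‖z i‖ ^ 2 + (1 - 1 / m) * ‖∑ i, p i • z i‖ ^ 2
      ≤ 1 / m * (2 * A + 2 * D) + (1 - 1 / m) * (2 * A + 2 * ‖gbar‖ ^ 2) := by
        gcongr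
    _ ≤ 3 * A + 3 * ‖gbar‖ ^ 2 + 3 / m * D := by
        rw [div_eq_mul_one_div 3]
        have ht0 : 0 ≤ 1 / (m : ℝ) := by positivity
        nlinarith [mul_nonneg ht0 hD, mul_nonneg ht0 (sq_nonneg ‖gbar‖)]

/-- Lemma 1 (FedNova) for MD sampling: second-moment bound on the aggregated update.
The expectation over the m i.i.d. sampled indices is written as a sum over all index
tuples weighted by their product probability. -/
theorem md_sampling_second_moment (n m d : ℕ) (hm : 0 < m)
    (p : Fin n → ℝ) (hp0 : ∀ i, 0 ≤ p i) (hp1 : ∑ i, p i = 1)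
    (z g : Fin n → EuclideanSpace ℝ (Fin d))
    (gbar : EuclideanSpace ℝ (Fin d)) (hgbar : gbar = ∑ i, p i • g i)
    (β κ : ℝ) (hβ : 1 ≤ β ^ 2) (hκ : 0 ≤ κ)
    (hdiss : ∑ i, p i * ‖g i‖ ^ 2 ≤ β ^ 2 * ‖gbar‖ ^ 2 + κ ^ 2) :
    ∑ l : Fin m → Fin n, (∏ j, p (l j)) * ‖(1 / (m : ℝ)) • ∑ j, z (l j)‖ ^ 2 ≤
      3 * (∑ i, p i * ‖z i - g i‖ ^ 2) + 3 * ‖gbar‖ ^ 2 +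
        (3 / (m : ℝ)) * (β ^ 2 * ‖gbar‖ ^ 2 + κ ^ 2) :=
  md_sampling_second_moment_general n m d hm p hp0 hp1 z g gbar hgbar β κ hdiss
end

section
/- Let l_1,...,l_m be independent indices with P(l_k = i) = r_{k,i} and ∑_{k=1}^m r_{k,i} = m p_i for all i. For any z_1,...,z_n, g_1,...,g_n ∈ ℝ^d with g = ∑_i p_i g_i satisfying ∑_i p_i ‖g_i‖² ≤ β²‖g‖² + κ², one has E[‖(1/m)∑_{k=1}^m z_{l_k}‖²] ≤ 3∑_{i=1}^n p_i ‖z_i − g_i‖² + 3‖g‖² + (3/m)(β²‖g‖² + κ²). -/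
/-!
Write the sampled average as `A + B + ḡ`, where `A` averages the `z_{l_k} - g_{l_k}`, `B` averages
the centred terms `g_{l_k} - ∑ᵢ r_{k,i} gᵢ`, and `ḡ = (1/m) ∑ₖ ∑ᵢ r_{k,i} gᵢ` by unbiasedness.
Then `‖A + B + ḡ‖² ≤ 3 (‖A‖² + ‖B‖² + ‖ḡ‖²)`. Cauchy–Schwarz and unbiasedness give
`E‖A‖² ≤ ∑ᵢ pᵢ ‖zᵢ - gᵢ‖²`. The summands of `B` are independent and centred, so the cross terms
vanish and `E‖B‖²` is `1/m²` times the sum of their variances; each variance is at most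
`∑ᵢ r_{k,i} ‖gᵢ‖²`, and by unbiasedness these add up to `m ∑ᵢ pᵢ ‖gᵢ‖²`.
-/

open Finset

section Norm

variable {E : Type*} [SeminormedAddCommGroup E]

theorem norm_sum_sq_le_card_mul {ι : Type*} (s : Finset ι) (x : ι → E) :
    ‖∑ i ∈ s, x i‖ ^ 2 ≤ #s * ∑ i ∈ s, ‖x i‖ ^ 2 :=
  (pow_le_pow_left₀ (norm_nonneg _) (norm_sum_le s x) 2).trans sq_sum_le_card_mul_sum_sq

theorem norm_add₃_sq_le (x y z : E) : ‖x + y + z‖ ^ 2 ≤ 3 * (‖x‖ ^ 2 + ‖y‖ ^ 2 + ‖z‖ ^ 2) := by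
  simpa [Fin.sum_univ_three, add_assoc] using norm_sum_sq_le_card_mul univ ![x, y, z]

end Norm

theorem sum_mul_norm_sub_sum_smul_sq_le {E : Type*} [NormedAddCommGroup E] [InnerProductSpace ℝ E]
    {α : Type*} {s : Finset α} {w : α → ℝ} (hw : ∑ a ∈ s, w a = 1) (x : α → E) :
    ∑ a ∈ s, w a * ‖x a - ∑ b ∈ s, w b • x b‖ ^ 2 ≤ ∑ a ∈ s, w a * ‖x a‖ ^ 2 := by
  set c := ∑ b ∈ s, w b • x b
  have hc : ∑ a ∈ s, w a * inner ℝ (x a) c = ‖c‖ ^ 2 := by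
    simp only [← real_inner_smul_left, ← sum_inner, c, real_inner_self_eq_norm_sq]
  have hvar : ∑ a ∈ s, w a * ‖x a - c‖ ^ 2 = ∑ a ∈ s, w a * ‖x a‖ ^ 2 - ‖c‖ ^ 2 := by
    simp only [norm_sub_sq_real, mul_add, mul_sub, sum_add_distrib, sum_sub_distrib, ← sum_mul, hw]
    rw [← hc]
    simp only [one_mul, mul_left_comm _ (2 : ℝ), ← mul_sum]
    ring
  linarith [sq_nonneg ‖c‖]

section ProductWeights

variable {ι α : Type*} [Fintype ι] [DecidableEq ι] [Fintype α]

theorem sum_prod_mul_prod (r f : ι → α → ℝ) :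
    ∑ l : ι → α, (∏ k, r k (l k)) * ∏ k, f k (l k) = ∏ k, ∑ a, r k a * f k a := by
  simp only [← prod_mul_distrib]
  exact (Fintype.prod_sum fun k a => r k a * f k a).symm

variable {r : ι → α → ℝ}

theorem sum_prod_mul_apply (hr : ∀ k, ∑ a, r k a = 1) (k₀ : ι) (φ : α → ℝ) :
    ∑ l : ι → α, (∏ k, r k (l k)) * φ (l k₀) = ∑ a, r k₀ a * φ a := by
  simpa [Fintype.prod_ite_eq', hr] using
    sum_prod_mul_prod r (fun k a => if k = k₀ then φ a else 1)

theorem sum_prod_mul_apply_mul_apply (hr : ∀ k, ∑ a, r k a = 1) {k₁ k₂ : ι} (h : k₁ ≠ k₂)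
    (φ ψ : α → ℝ) :
    ∑ l : ι → α, (∏ k, r k (l k)) * (φ (l k₁) * ψ (l k₂)) =
      (∑ a, r k₁ a * φ a) * ∑ a, r k₂ a * ψ a := by
  set f : ι → α → ℝ := fun k a => if k = k₁ then φ a else if k = k₂ then ψ a else 1
  have hf : ∀ l : ι → α, ∏ k, f k (l k) = φ (l k₁) * ψ (l k₂) := fun l => by
    rw [Fintype.prod_eq_mul k₁ k₂ h (fun k hk => by simp [f, hk])]
    simp [f, h.symm]
  have := sum_prod_mul_prod r f
  rw [Fintype.prod_eq_mul k₁ k₂ h (fun k hk => by simp [f, hk, hr])] at this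
  simpa [f, hf, h.symm] using this

theorem sum_prod_mul_apply₂ (hr : ∀ k, ∑ a, r k a = 1) {k₁ k₂ : ι} (h : k₁ ≠ k₂)
    (φ : α → α → ℝ) :
    ∑ l : ι → α, (∏ k, r k (l k)) * φ (l k₁) (l k₂) = ∑ a, ∑ b, r k₁ a * r k₂ b * φ a b := by
  classical
  -- expand `φ` over indicators of its two arguments to reduce to the product case
  have hφ : ∀ l : ι → α, φ (l k₁) (l k₂) =
      ∑ a, ∑ b, ((if l k₁ = a then 1 else 0) * (if l k₂ = b then 1 else 0)) * φ a b := by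
    simp [ite_mul]
  simp_rw [hφ, mul_sum]
  rw [sum_comm]
  refine sum_congr rfl fun a _ => ?_
  rw [sum_comm]
  refine sum_congr rfl fun b _ => ?_
  have := sum_prod_mul_apply_mul_apply hr h (fun x => if x = a then 1 else 0)
    (fun x => if x = b then 1 else 0)
  simp only [← mul_assoc] at this ⊢
  rw [← sum_mul, this]
  simp

theorem sum_prod_mul_norm_sum_sq_s12 {E : Type*} [NormedAddCommGroup E] [InnerProductSpace ℝ E]
    (hr : ∀ k, ∑ a, r k a = 1) (X : ι → α → E) (hX : ∀ k, ∑ a, r k a • X k a = 0) :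
    ∑ l : ι → α, (∏ k, r k (l k)) * ‖∑ k, X k (l k)‖ ^ 2 = ∑ k, ∑ a, r k a * ‖X k a‖ ^ 2 := by
  have hcross : ∀ k₁ k₂, k₁ ≠ k₂ →
      ∑ l : ι → α, (∏ k, r k (l k)) * inner ℝ (X k₁ (l k₁)) (X k₂ (l k₂)) = 0 := by
    intro k₁ k₂ h
    rw [sum_prod_mul_apply₂ hr h fun a b => inner ℝ (X k₁ a) (X k₂ b),
      ← inner_zero_left (𝕜 := ℝ) (∑ b, r k₂ b • X k₂ b), ← hX k₁,
      sum_inner]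
    simp only [inner_sum, real_inner_smul_left, real_inner_smul_right, mul_assoc]
    exact sum_congr rfl fun _ _ => sum_congr rfl fun _ _ => mul_left_comm _ _ _
  simp_rw [← real_inner_self_eq_norm_sq, sum_inner, inner_sum, mul_sum]
  rw [sum_comm]
  refine sum_congr rfl fun k₁ _ => ?_
  rw [sum_comm, sum_eq_single k₁ (fun k₂ _ h => hcross k₁ k₂ h.symm) (by simp)]
  exact sum_prod_mul_apply hr k₁ fun a => inner ℝ (X k₁ a) (X k₁ a)

end ProductWeights

section ClusteredSampling

variable {ι α : Type*} [Fintype ι] [Fintype α] {r : ι → α → ℝ} {p : α → ℝ}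

theorem sum_sum_smul_eq_card_smul {M : Type*} [AddCommGroup M] [Module ℝ M]
    (hunb : ∀ a, ∑ k, r k a = Fintype.card ι * p a) (v : α → M) :
    ∑ k, ∑ a, r k a • v a = (Fintype.card ι : ℝ) • ∑ a, p a • v a := by
  rw [sum_comm, smul_sum]
  simp_rw [← sum_smul, hunb, mul_smul]

theorem sum_sum_mul_eq_card_mul (hunb : ∀ a, ∑ k, r k a = Fintype.card ι * p a) (v : α → ℝ) :
    ∑ k, ∑ a, r k a * v a = Fintype.card ι * ∑ a, p a * v a := by
  simpa only [smul_eq_mul] using sum_sum_smul_eq_card_smul hunb v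

variable [DecidableEq ι] [Nonempty ι]

theorem sum_prod_mul_norm_card_inv_smul_sum_sq_le {E : Type*} [SeminormedAddCommGroup E]
    [NormedSpace ℝ E] (hr0 : ∀ k a, 0 ≤ r k a) (hr1 : ∀ k, ∑ a, r k a = 1)
    (hunb : ∀ a, ∑ k, r k a = Fintype.card ι * p a) (y : α → E) :
    ∑ l : ι → α, (∏ k, r k (l k)) * ‖(Fintype.card ι : ℝ)⁻¹ • ∑ k, y (l k)‖ ^ 2 ≤
      ∑ a, p a * ‖y a‖ ^ 2 := by
  set c : ℝ := (Fintype.card ι : ℝ)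
  have hc : c ≠ 0 := by positivity
  have hmean : ∀ l : ι → α, ‖c⁻¹ • ∑ k, y (l k)‖ ^ 2 ≤ c⁻¹ * ∑ k, ‖y (l k)‖ ^ 2 := fun l => by
    rw [norm_smul, mul_pow, norm_inv, Real.norm_natCast]
    calc c⁻¹ ^ 2 * ‖∑ k, y (l k)‖ ^ 2 ≤ c⁻¹ ^ 2 * (c * ∑ k, ‖y (l k)‖ ^ 2) := by
          gcongr; simpa using norm_sum_sq_le_card_mul univ fun k => y (l k)
      _ = c⁻¹ * ∑ k, ‖y (l k)‖ ^ 2 := by rw [sq, mul_assoc, inv_mul_cancel_left₀ hc]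
  calc _ ≤ ∑ l : ι → α, (∏ k, r k (l k)) * (c⁻¹ * ∑ k, ‖y (l k)‖ ^ 2) :=
        sum_le_sum fun l _ => mul_le_mul_of_nonneg_left (hmean l)
          (prod_nonneg fun k _ => hr0 k (l k))
    _ = c⁻¹ * ∑ k, ∑ a, r k a * ‖y a‖ ^ 2 := by
        simp_rw [← sum_prod_mul_apply hr1 _ fun a => ‖y a‖ ^ 2, mul_sum]
        rw [sum_comm]
        exact sum_congr rfl fun _ _ => sum_congr rfl fun _ _ => by ring
    _ = ∑ a, p a * ‖y a‖ ^ 2 := by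
        rw [sum_sum_mul_eq_card_mul hunb, inv_mul_cancel_left₀ hc]

theorem sum_prod_mul_norm_card_inv_smul_sum_sub_sq_le {E : Type*} [NormedAddCommGroup E]
    [InnerProductSpace ℝ E] (hr1 : ∀ k, ∑ a, r k a = 1)
    (hunb : ∀ a, ∑ k, r k a = Fintype.card ι * p a) (g : α → E) :
    ∑ l : ι → α, (∏ k, r k (l k)) *
        ‖(Fintype.card ι : ℝ)⁻¹ • ∑ k, (g (l k) - ∑ a, r k a • g a)‖ ^ 2 ≤
      (Fintype.card ι : ℝ)⁻¹ * ∑ a, p a * ‖g a‖ ^ 2 := by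
  set c : ℝ := (Fintype.card ι : ℝ)
  have hc : c ≠ 0 := by positivity
  have hcentered : ∀ k, ∑ a, r k a • (g a - ∑ b, r k b • g b) = 0 := fun k => by
    simp only [smul_sub, sum_sub_distrib, ← sum_smul, hr1, one_smul, sub_self]
  calc _ = c⁻¹ ^ 2 * ∑ k, ∑ a, r k a * ‖g a - ∑ b, r k b • g b‖ ^ 2 := by
        simp_rw [norm_smul, mul_pow, Real.norm_eq_abs, sq_abs, mul_left_comm _ (c⁻¹ ^ 2),
          ← mul_sum]
        rw [sum_prod_mul_norm_sum_sq_s12 hr1 (fun k a => g a - ∑ b, r k b • g b) hcentered]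
    _ ≤ c⁻¹ ^ 2 * ∑ k, ∑ a, r k a * ‖g a‖ ^ 2 := by
        gcongr ?_ * ?_
        exact sum_le_sum fun k _ => sum_mul_norm_sub_sum_smul_sq_le (hr1 k) g
    _ = c⁻¹ * ∑ a, p a * ‖g a‖ ^ 2 := by
        rw [sum_sum_mul_eq_card_mul hunb, sq, mul_assoc, inv_mul_cancel_left₀ hc]

theorem sum_prod_mul_norm_card_inv_smul_sum_sq_le_three_mul {E : Type*} [NormedAddCommGroup E]
    [InnerProductSpace ℝ E] (hr0 : ∀ k a, 0 ≤ r k a) (hr1 : ∀ k, ∑ a, r k a = 1)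
    (hunb : ∀ a, ∑ k, r k a = Fintype.card ι * p a) (z g : α → E) :
    ∑ l : ι → α, (∏ k, r k (l k)) * ‖(Fintype.card ι : ℝ)⁻¹ • ∑ k, z (l k)‖ ^ 2 ≤
      3 * ∑ a, p a * ‖z a - g a‖ ^ 2 + 3 * ‖∑ a, p a • g a‖ ^ 2 +
        3 * ((Fintype.card ι : ℝ)⁻¹ * ∑ a, p a * ‖g a‖ ^ 2) := by
  set c : ℝ := (Fintype.card ι : ℝ)
  set gbar := ∑ a, p a • g a
  have hmean : c⁻¹ • ∑ k, ∑ a, r k a • g a = gbar := by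
    rw [sum_sum_smul_eq_card_smul hunb, inv_smul_smul₀ (by positivity)]
  have hsplit : ∀ l : ι → α, ‖c⁻¹ • ∑ k, z (l k)‖ ^ 2 ≤
      3 * (‖c⁻¹ • ∑ k, (z - g) (l k)‖ ^ 2 +
        ‖c⁻¹ • ∑ k, (g (l k) - ∑ a, r k a • g a)‖ ^ 2 + ‖gbar‖ ^ 2) := fun l => by
    have hdecomp : c⁻¹ • ∑ k, z (l k) = c⁻¹ • ∑ k, (z - g) (l k) +
        c⁻¹ • ∑ k, (g (l k) - ∑ a, r k a • g a) + gbar := by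
      rw [← hmean, ← smul_add, ← smul_add, ← sum_add_distrib, ← sum_add_distrib]
      simp
    exact hdecomp ▸ norm_add₃_sq_le _ _ _
  have hprob : ∑ l : ι → α, ∏ k, r k (l k) = 1 := by
    simp [← Fintype.prod_sum, hr1]
  have hA := sum_prod_mul_norm_card_inv_smul_sum_sq_le hr0 hr1 hunb (z - g)
  have hB := sum_prod_mul_norm_card_inv_smul_sum_sub_sq_le hr1 hunb g
  calc _ ≤ ∑ l : ι → α, (∏ k, r k (l k)) * (3 * (‖c⁻¹ • ∑ k, (z - g) (l k)‖ ^ 2 +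
        ‖c⁻¹ • ∑ k, (g (l k) - ∑ a, r k a • g a)‖ ^ 2 + ‖gbar‖ ^ 2)) :=
        sum_le_sum fun l _ => mul_le_mul_of_nonneg_left (hsplit l)
          (prod_nonneg fun k _ => hr0 k (l k))
    _ ≤ _ := by
        simp only [mul_add, mul_left_comm _ (3 : ℝ), sum_add_distrib, ← mul_sum, ← sum_mul, hprob]
        simp only [Pi.sub_apply] at hA ⊢
        linarith

end ClusteredSampling

theorem clustered_sampling_second_moment_general (n m d : ℕ) (hm : 0 < m)
    (p : Fin n → ℝ)
    (r : Fin m → Fin n → ℝ)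
    (hr0 : ∀ k i, 0 ≤ r k i) (hr1 : ∀ k, ∑ i, r k i = 1)
    (hunb : ∀ i, ∑ k, r k i = m * p i)
    (z g : Fin n → EuclideanSpace ℝ (Fin d))
    (gbar : EuclideanSpace ℝ (Fin d)) (hgbar : gbar = ∑ i, p i • g i)
    (β κ : ℝ)
    (hdiss : ∑ i, p i * ‖g i‖ ^ 2 ≤ β ^ 2 * ‖gbar‖ ^ 2 + κ ^ 2) :
    ∑ l : Fin m → Fin n, (∏ k, r k (l k)) * ‖(1 / (m : ℝ)) • ∑ k, z (l k)‖ ^ 2 ≤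
      3 * (∑ i, p i * ‖z i - g i‖ ^ 2) + 3 * ‖gbar‖ ^ 2 +
        (3 / (m : ℝ)) * (β ^ 2 * ‖gbar‖ ^ 2 + κ ^ 2) := by
  have : NeZero m := ⟨hm.ne'⟩
  have hunb' : ∀ i, ∑ k, r k i = Fintype.card (Fin m) * p i := by simpa using hunb
  have hbound := sum_prod_mul_norm_card_inv_smul_sum_sq_le_three_mul hr0 hr1 hunb' z g
  have hdiss' := mul_le_mul_of_nonneg_left hdiss (inv_nonneg.2 (Nat.cast_nonneg' m : (0 : ℝ) ≤ m))
  rw [Fintype.card_fin, ← hgbar] at hbound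
  rw [one_div, div_eq_mul_inv]
  linarith

/-- Lemma 1 for unbiased clustered sampling: second-moment bound on the aggregated
update when the m indices are drawn independently from cluster distributions `r k`
with `∑_k r k i = m p i`. -/
theorem clustered_sampling_second_moment (n m d : ℕ) (hm : 0 < m)
    (p : Fin n → ℝ) (hp0 : ∀ i, 0 ≤ p i) (hp1 : ∑ i, p i = 1)
    (r : Fin m → Fin n → ℝ)
    (hr0 : ∀ k i, 0 ≤ r k i) (hr1 : ∀ k, ∑ i, r k i = 1)
    (hunb : ∀ i, ∑ k, r k i = m * p i)
    (z g : Fin n → EuclideanSpace ℝ (Fin d))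
    (gbar : EuclideanSpace ℝ (Fin d)) (hgbar : gbar = ∑ i, p i • g i)
    (β κ : ℝ) (hβ : 1 ≤ β ^ 2) (hκ : 0 ≤ κ)
    (hdiss : ∑ i, p i * ‖g i‖ ^ 2 ≤ β ^ 2 * ‖gbar‖ ^ 2 + κ ^ 2) :
    ∑ l : Fin m → Fin n, (∏ k, r k (l k)) * ‖(1 / (m : ℝ)) • ∑ k, z (l k)‖ ^ 2 ≤
      3 * (∑ i, p i * ‖z i - g i‖ ^ 2) + 3 * ‖gbar‖ ^ 2 +
        (3 / (m : ℝ)) * (β ^ 2 * ‖gbar‖ ^ 2 + κ ^ 2) :=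
  clustered_sampling_second_moment_general n m d hm p r hr0 hr1 hunb z g gbar hgbar β κ hdiss
end

section
/- For probability vectors p = (p_i) and cluster rows (r_{k,i}) with r_{k,i} ∈ [0,1], ∑_i r_{k,i} = 1 for each k, and ∑_k r_{k,i} = m p_i for each i: the variance gap m p_i(1−p_i) − ∑_k r_{k,i}(1−r_{k,i}) equals ∑_k r_{k,i}² − m p_i², which is nonnegative, and is strictly positive unless r_{k,i} = p_i for all k. -/
open Finset

/-- Aggregation-weight variance comparison for a fixed client `i`: the variance gap
`m p_i(1−p_i) − ∑_k r_{k,i}(1−r_{k,i})` equals `∑_k r_{k,i}² − m p_i²`, is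
nonnegative, and is strictly positive unless `r_{k,i} = p_i` for all k. -/
theorem variance_gap (n m : ℕ)
    (p : Fin n → ℝ) (hp0 : ∀ i, 0 ≤ p i) (hpsum : ∑ i, p i = 1)
    (r : Fin m → Fin n → ℝ)
    (hr0 : ∀ k i, 0 ≤ r k i) (hr1 : ∀ k i, r k i ≤ 1)
    (hrow : ∀ k, ∑ i, r k i = 1)
    (hunb : ∀ i, ∑ k, r k i = m * p i)
    (i : Fin n) :
    ((m : ℝ) * (p i * (1 - p i)) - ∑ k, r k i * (1 - r k i) =
        (∑ k, (r k i) ^ 2) - m * (p i) ^ 2) ∧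
      (0 ≤ (∑ k, (r k i) ^ 2) - m * (p i) ^ 2) ∧
      ((∃ k, r k i ≠ p i) → 0 < (∑ k, (r k i) ^ 2) - m * (p i) ^ 2) := by
  have key : (∑ k, (r k i) ^ 2) - m * (p i) ^ 2 = ∑ k, (r k i - p i) ^ 2 := by
    have : ∑ k, (r k i - p i) ^ 2
        = (∑ k, (r k i) ^ 2) - 2 * p i * (∑ k, r k i) + m * (p i) ^ 2 := by
      rw [Finset.sum_congr rfl (fun k _ => by ring :
        ∀ k ∈ Finset.univ, (r k i - p i) ^ 2
          = (r k i) ^ 2 - 2 * p i * r k i + (p i) ^ 2)]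
      rw [Finset.sum_add_distrib, Finset.sum_sub_distrib, ← Finset.mul_sum,
        Finset.sum_const, Finset.card_univ, Fintype.card_fin, nsmul_eq_mul]
    rw [this, hunb]; ring
  refine ⟨?_, ?_, ?_⟩
  · have h1 : ∑ k, r k i * (1 - r k i) = (∑ k, r k i) - ∑ k, (r k i) ^ 2 := by
      rw [← Finset.sum_sub_distrib]
      exact Finset.sum_congr rfl fun k _ => by ring
    rw [h1, hunb]; ring
  · rw [key]; exact Finset.sum_nonneg fun k _ => sq_nonneg _
  · rintro ⟨k, hk⟩
    rw [key]
    exact Finset.sum_pos' (fun j _ => sq_nonneg _)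
      ⟨k, Finset.mem_univ k, pow_pos (abs_pos.mpr (sub_ne_zero.mpr hk)) 2 |>.trans_eq (by rw [sq_abs])⟩
end
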